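/- If two reduced words i, i' ∈ R(u,v) are related by a 2- or 3-move, then the linear maps φ±_{i',i} satisfy φ⁻_{i,i'} ∘ φ⁺_{i',i} = Id and φ⁺_{i,i'} ∘ φ⁻_{i',i} = Id. -/

import Mathlib

/-!
Away from the position `k` of the move, `φ±` only permute coordinates by the involution `σ`;
at `k` they are the mutations `x_k ↦ ∑_{a → k} x_a - x_k` and `x_k ↦ ∑_{k → b} x_b - x_k`.
Hence `φ⁻_{i,i'} ∘ φ⁺_{i',i} = Id` as soon as `σ` maps the in-neighbours of `k` in `Σ(i)` onto the
out-neighbours of `k` in `Σ(i')`, which is a check on the few letters near `k`. Reversing every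
sign of a word reverses every edge of `Σ` and so exchanges `φ⁺` and `φ⁻`: the second identity is
the first one for the sign-reversed words.
-/

open scoped Classical

namespace SLC

variable {V : Type*} [DecidableEq V]

/-- The simply-laced Coxeter matrix associated with a simple graph `P`:
`M i i = 1`, `M i j = 3` if `i` and `j` are adjacent, and `M i j = 2` otherwise. -/
noncomputable def coxeterMatrix (P : SimpleGraph V) : CoxeterMatrix V where
  M := fun i j => if i = j then 1 else if P.Adj i j then 3 else 2
  isSymm := by
    ext i j
    show (if j = i then 1 else if P.Adj j i then 3 else 2) = (if i = j then 1 else if P.Adj i j then 3 else 2)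
    by_cases h : i = j
    · subst h; rfl
    · rw [if_neg (Ne.symm h), if_neg h]
      by_cases ha : P.Adj i j
      · rw [if_pos (P.adj_symm ha), if_pos ha]
      · rw [if_neg (fun hc => ha (P.adj_symm hc)), if_neg ha]
  diagonal := by intro i; simp
  off_diagonal := by
    intro i i' h
    show (if i = i' then 1 else if P.Adj i i' then 3 else 2) ≠ 1
    rw [if_neg h]
    split <;> omega

/-- `e` is a reduced word for the pair `(u, v)`: the subword of entries with negative sign
(first component `false`), with signs forgotten, is a reduced word for `u`, and the subword of
entries with positive sign is a reduced word for `v`. -/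
def IsRWordPair {W : Type*} [Group W] (P : SimpleGraph V)
    (cs : CoxeterSystem (coxeterMatrix P) W) (u v : W) {m : ℕ}
    (e : Fin m → Bool × V) : Prop :=
  cs.wordProd (((List.ofFn e).filter fun p => !p.1).map Prod.snd) = u ∧
    (((List.ofFn e).filter fun p => !p.1).map Prod.snd).length = cs.length u ∧
    cs.wordProd (((List.ofFn e).filter fun p => p.1).map Prod.snd) = v ∧
    (((List.ofFn e).filter fun p => p.1).map Prod.snd).length = cs.length v

/-- `k = l⁻`: `k` is the largest index smaller than `l` carrying the same letter of `P`. -/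
def IsPred {m : ℕ} (e : Fin m → Bool × V) (k l : Fin m) : Prop :=
  k < l ∧ (e k).2 = (e l).2 ∧ ∀ j, k < j → j < l → (e j).2 ≠ (e l).2

/-- The index `l` is `e`-bounded: `l⁻ > 0`, i.e. `l` has a predecessor. -/
def BoundedIdx {m : ℕ} (e : Fin m → Bool × V) (l : Fin m) : Prop :=
  ∃ k, IsPred e k l

/-- Conditions (ii) and (iii) of Definition 3.1 (inclined edges), for `k < l`. -/
def InclCond {m : ℕ} (P : SimpleGraph V) (e : Fin m → Bool × V) (k l : Fin m) : Prop :=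
  k < l ∧ P.Adj (e k).2 (e l).2 ∧
    ((∃ p, IsPred e p l ∧ p < k ∧ (∀ q, IsPred e q k → q < p) ∧ (e p).1 = (e k).1) ∨
     (∃ q, IsPred e q k ∧ (∀ p, IsPred e p l → p < q) ∧ (e q).1 = !(e k).1))

/-- `a → b` is a directed edge of the graph `Σ(e)`. -/
def DirEdge {m : ℕ} (P : SimpleGraph V) (e : Fin m → Bool × V) (a b : Fin m) : Prop :=
  (IsPred e a b ∧ (e a).1 = true) ∨ (IsPred e b a ∧ (e b).1 = false) ∨
    (InclCond P e a b ∧ (e a).1 = false) ∨ (InclCond P e b a ∧ (e b).1 = true)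

/-- `{a, b}` is an edge of the graph `Σ(e)` (in some direction). -/
def UEdge {m : ℕ} (P : SimpleGraph V) (e : Fin m → Bool × V) (a b : Fin m) : Prop :=
  DirEdge P e a b ∨ DirEdge P e b a

/-- Adjacency in the doubled graph `P̃`. -/
def TAdj (P : SimpleGraph V) (p q : Bool × V) : Prop :=
  p.1 = q.1 ∧ P.Adj p.2 q.2

/-- The negative of a letter of `P̃`. -/
def negEnt (p : Bool × V) : Bool × V := (!p.1, p.2)

/-- The combinatorial data of a 2- or 3-move: the (consecutive) positions involved. -/
inductive MoveSpec (m : ℕ) where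
  | two (a b : Fin m)
  | three (a b c : Fin m)

/-- The position of a move (the last of the positions involved). -/
def MoveSpec.pos {m : ℕ} : MoveSpec m → Fin m
  | .two _ b => b
  | .three _ _ c => c

/-- `e'` is obtained from `e` by the 2- or 3-move described by `s`. -/
def IsMove {m : ℕ} (P : SimpleGraph V) (e e' : Fin m → Bool × V) : MoveSpec m → Prop
  | .two a b => (b : ℕ) = (a : ℕ) + 1 ∧ ¬ TAdj P (e a) (e b) ∧
      e' a = e b ∧ e' b = e a ∧ ∀ l, l ≠ a → l ≠ b → e' l = e l
  | .three a b c => (b : ℕ) = (a : ℕ) + 1 ∧ (c : ℕ) = (b : ℕ) + 1 ∧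
      e c = e a ∧ TAdj P (e b) (e c) ∧
      e' a = e b ∧ e' b = e a ∧ e' c = e b ∧ ∀ l, l ≠ a → l ≠ b → l ≠ c → e' l = e l

/-- A move is trivial if it is a 2-move interchanging entries which are not opposite. -/
def MoveTrivial {m : ℕ} (e : Fin m → Bool × V) : MoveSpec m → Prop
  | .two a b => e b ≠ negEnt (e a)
  | .three _ _ _ => False

/-- The permutation `σ` associated with a move. -/
noncomputable def moveSigma {m : ℕ} (e : Fin m → Bool × V) : MoveSpec m → Equiv.Perm (Fin m)
  | .two a b => if e b = negEnt (e a) then 1 else Equiv.swap a b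
  | .three a b _ => Equiv.swap a b

/-- The skew-symmetric form `Ω` of the graph `Σ(e)`, over a commutative ring `R`. -/
noncomputable def omegaForm (R : Type*) [CommRing R] {m : ℕ} (P : SimpleGraph V)
    (e : Fin m → Bool × V) (x y : Fin m → R) : R :=
  ∑ a : Fin m, ∑ b : Fin m, if DirEdge P e a b then x a * y b - x b * y a else 0

/-- The symplectic transvection `τ_k` of the graph `Σ(e)`, over `R`. -/
noncomputable def transv (R : Type*) [CommRing R] {m : ℕ} (P : SimpleGraph V)
    (e : Fin m → Bool × V) (k : Fin m) (x : Fin m → R) : Fin m → R :=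
  x - omegaForm R P e x (Pi.single k 1) • (Pi.single k 1 : Fin m → R)

/-- The group `Γ_e ⊆ GL_m(ℤ)` generated by the transvections `τ_k`, `k ∈ B(e)`. -/
noncomputable def Gamma {m : ℕ} (P : SimpleGraph V) (e : Fin m → Bool × V) :
    Subgroup ((Fin m → ℤ) ≃ₗ[ℤ] (Fin m → ℤ)) :=
  Subgroup.closure {g | ∃ k, BoundedIdx e k ∧ ⇑g = transv ℤ P e k}

/-- The group `Γ_e(F₂)` of linear transformations of `F₂^m` generated by the reductions
modulo 2 of the transvections `τ_k`, `k ∈ B(e)`. -/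
noncomputable def GammaF2 {m : ℕ} (P : SimpleGraph V) (e : Fin m → Bool × V) :
    Subgroup (Equiv.Perm (Fin m → ZMod 2)) :=
  Subgroup.closure {g | ∃ k, BoundedIdx e k ∧ ⇑g = transv (ZMod 2) P e k}

/-- The map `φ⁺` associated with a move. -/
noncomputable def phiP {m : ℕ} (P : SimpleGraph V) (e : Fin m → Bool × V) (s : MoveSpec m)
    (x : Fin m → ℤ) : Fin m → ℤ := fun l =>
  if l = s.pos ∧ ¬ MoveTrivial e s then
    (∑ a : Fin m, if DirEdge P e a s.pos then x a else 0) - x s.pos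
  else x (moveSigma e s l)

/-- The map `φ⁻` associated with a move. -/
noncomputable def phiM {m : ℕ} (P : SimpleGraph V) (e : Fin m → Bool × V) (s : MoveSpec m)
    (x : Fin m → ℤ) : Fin m → ℤ := fun l =>
  if l = s.pos ∧ ¬ MoveTrivial e s then
    (∑ b : Fin m, if DirEdge P e s.pos b then x b else 0) - x s.pos
  else x (moveSigma e s l)

section Mutation

variable {ι M : Type*} [Fintype ι] [DecidableEq ι] [AddCommGroup M]

noncomputable def mutationMap (σ : Equiv.Perm ι) (k : ι) (N : ι → Prop) (x : ι → M) : ι → M :=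
  fun l => if l = k then (∑ a, if N a then x a else 0) - x k else x (σ l)

theorem mutationMap_comp_mutationMap {σ : Equiv.Perm ι} (hσ : Function.Involutive σ) {k : ι}
    (hk : σ k = k) {N N' : ι → Prop} (hN : ∀ y, N y ↔ N' (σ y)) (hk' : ¬ N' k) :
    mutationMap σ k N' ∘ mutationMap σ k N = (id : (ι → M) → ι → M) := by
  funext x l
  by_cases hl : l = k
  · subst hl
    have hsum : (∑ b, if N' b then mutationMap σ l N x b else 0) =
        ∑ a, if N a then x a else 0 := by
      rw [← Equiv.sum_comp σ]
      refine Finset.sum_congr rfl fun y _ => ?_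
      by_cases hy : N y
      · have hy' : σ y ≠ l := fun h => hk' (h ▸ (hN y).1 hy)
        simp [mutationMap, hy, (hN y).1 hy, hy', hσ y]
      · simp [hy, (hN y).not.1 hy]
    rw [Function.comp_apply, mutationMap, if_pos rfl, hsum]
    simp [mutationMap]
  · have hl' : σ l ≠ k := fun h => hl (by rw [← hσ l, h, hk])
    simp [mutationMap, hl, hl', hσ l]

end Mutation

section Flip

variable {V : Type*} {m : ℕ} {P : SimpleGraph V} {f : Fin m → Bool × V}

theorem negEnt_involutive : Function.Involutive (negEnt : Bool × V → Bool × V) := by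
  simp [Function.Involutive, negEnt]

theorem eq_negEnt_comm {p q : Bool × V} : p = negEnt q ↔ q = negEnt p :=
  eq_comm.trans negEnt_involutive.eq_iff

theorem isPred_negEnt_comp : IsPred (negEnt ∘ f) = IsPred f := rfl

theorem inclCond_negEnt_comp : InclCond P (negEnt ∘ f) = InclCond P f := by
  funext k l
  simp [InclCond, IsPred, negEnt]

theorem dirEdge_negEnt_comp {a b : Fin m} : DirEdge P (negEnt ∘ f) a b ↔ DirEdge P f b a := by
  simp only [DirEdge, isPred_negEnt_comp, inclCond_negEnt_comp, Function.comp_apply, negEnt,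
    Bool.not_eq_true', Bool.not_eq_false']
  tauto

theorem tAdj_negEnt {p q : Bool × V} : TAdj P (negEnt p) (negEnt q) ↔ TAdj P p q := by
  simp [TAdj, negEnt]

theorem moveTrivial_negEnt_comp {s : MoveSpec m} :
    MoveTrivial (negEnt ∘ f) s ↔ MoveTrivial f s := by
  cases s with
  | two a b => simp [MoveTrivial, negEnt_involutive.injective.eq_iff]
  | three => rfl

theorem moveSigma_negEnt_comp [DecidableEq V] (s : MoveSpec m) :
    moveSigma (negEnt ∘ f) s = moveSigma f s := by
  cases s with
  | two a b => simp [moveSigma, negEnt_involutive.injective.eq_iff]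
  | three => rfl

theorem phiM_eq_phiP_negEnt_comp [DecidableEq V] (s : MoveSpec m) :
    phiM P f s = phiP P (negEnt ∘ f) s := by
  funext x l
  simp only [phiM, phiP, moveTrivial_negEnt_comp, moveSigma_negEnt_comp, dirEdge_negEnt_comp]

end Flip

section LocalStructure

variable {V : Type*} {m : ℕ} {P : SimpleGraph V} {f : Fin m → Bool × V}

theorem isPred_congr {g : Fin m → Bool × V} (h : ∀ l, (g l).2 = (f l).2) :
    IsPred g = IsPred f := by
  funext k l
  simp only [IsPred, h]

theorem dirEdge_irrefl (a : Fin m) : ¬ DirEdge P f a a := by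
  rintro (⟨h, -⟩ | ⟨h, -⟩ | ⟨h, -⟩ | ⟨h, -⟩) <;> exact lt_irrefl a h.1

theorem dirEdge_to_iff_of_lt {x k : Fin m} (h : x < k) :
    DirEdge P f x k ↔ (IsPred f x k ∧ (f x).1 = true) ∨ (InclCond P f x k ∧ (f x).1 = false) := by
  have hp : ¬ IsPred f k x := fun hp => lt_asymm h hp.1
  have hi : ¬ InclCond P f k x := fun hi => lt_asymm h hi.1
  simp only [DirEdge, hp, hi, false_and, false_or, or_false]

theorem dirEdge_to_iff_of_gt {x k : Fin m} (h : k < x) :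
    DirEdge P f x k ↔ (IsPred f k x ∧ (f k).1 = false) ∨ (InclCond P f k x ∧ (f k).1 = true) := by
  have hp : ¬ IsPred f x k := fun hp => lt_asymm h hp.1
  have hi : ¬ InclCond P f x k := fun hi => lt_asymm h hi.1
  simp only [DirEdge, hp, hi, false_and, false_or]

theorem isPred_iff_of_lt_of_snd_eq {f g : Fin m → Bool × V} {b c y : Fin m}
    (hc : (c : ℕ) = b + 1) (hgb : (g b).2 = (f c).2) (hgc : (g c).2 ≠ (f c).2)
    (hrest : ∀ l, c < l → (g l).2 = (f l).2) (hy : c < y) : IsPred g b y ↔ IsPred f c y := by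
  rw [IsPred, IsPred, hrest y hy, hgb]
  refine ⟨fun ⟨_, hyl, hno⟩ => ⟨hy, hyl, fun j hcj hjy => ?_⟩,
    fun ⟨_, hyl, hno⟩ => ⟨by omega, hyl, fun j hbj hjy => ?_⟩⟩
  · rw [← hrest j hcj]
    exact hno j (by omega) hjy
  · rcases eq_or_ne j c with rfl | hjc
    · rwa [← hyl]
    · rw [hrest j (by omega)]
      exact hno j (by omega) hjy

section NegEntPair

variable {a b : Fin m} (hb : (b : ℕ) = a + 1) (hneg : f b = negEnt (f a))
include hb hneg

theorem isPred_iff_of_negEnt_pair (k : Fin m) : IsPred f k b ↔ k = a := by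
  constructor
  · rintro ⟨hkb, -, hno⟩
    by_contra hka
    exact hno a (by omega) (by omega) (by rw [hneg]; rfl)
  · rintro rfl
    exact ⟨by omega, by rw [hneg]; rfl, fun j h1 h2 => by omega⟩

theorem not_inclCond_of_negEnt_pair (x : Fin m) : ¬ InclCond P f x b := by
  rintro ⟨hxb, -, hp | hq⟩
  · obtain ⟨p, hp, hpx, -⟩ := hp
    have := (isPred_iff_of_negEnt_pair hb hneg p).1 hp
    omega
  · obtain ⟨q, hq, hall, -⟩ := hq
    have := hall a ((isPred_iff_of_negEnt_pair hb hneg a).2 rfl)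
    have := hq.1
    omega

theorem inclCond_from_iff_of_negEnt_pair (y : Fin m) :
    InclCond P f b y ↔ b < y ∧ P.Adj (f b).2 (f y).2 ∧ ∀ p, IsPred f p y → p < a := by
  have hpred := isPred_iff_of_negEnt_pair hb hneg
  constructor
  · rintro ⟨hby, hadj, ⟨p, -, hpb, hall, -⟩ | ⟨q, hq, hall, -⟩⟩
    · have := hall a ((hpred a).2 rfl)
      omega
    · exact ⟨hby, hadj, (hpred q).1 hq ▸ hall⟩
  · rintro ⟨hby, hadj, hall⟩
    exact ⟨hby, hadj, Or.inr ⟨a, (hpred a).2 rfl, hall, by simp [hneg, negEnt]⟩⟩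

theorem dirEdge_to_iff_of_negEnt_pair (x : Fin m) :
    DirEdge P f x b ↔ ((x = a ∨ IsPred f b x) ∧ (f a).1 = true) ∨
      ((b < x ∧ P.Adj (f b).2 (f x).2 ∧ ∀ p, IsPred f p x → p < a) ∧ (f a).1 = false) := by
  rcases lt_trichotomy x b with hx | rfl | hx
  · have hbx : ¬ IsPred f b x := fun h => lt_asymm hx h.1
    rw [dirEdge_to_iff_of_lt hx, isPred_iff_of_negEnt_pair hb hneg]
    simp only [not_inclCond_of_negEnt_pair hb hneg, hbx, not_lt.2 hx.le, false_and, or_false]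
    constructor <;> rintro ⟨rfl, h⟩ <;> exact ⟨rfl, h⟩
  · have hxa : x ≠ a := fun h => by omega
    simp [dirEdge_irrefl, hxa, IsPred]
  · have hxa : x ≠ a := fun h => by omega
    rw [dirEdge_to_iff_of_gt hx, inclCond_from_iff_of_negEnt_pair hb hneg]
    simp [hxa, hx, hneg, negEnt]

end NegEntPair

section Braid

variable {a b c : Fin m} (hb : (b : ℕ) = a + 1) (hc : (c : ℕ) = b + 1) (hca : f c = f a)
  (hbc : TAdj P (f b) (f c))
include hb hc hca hbc

theorem isPred_iff_of_braid (k : Fin m) : IsPred f k c ↔ k = a := by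
  have hba : (f b).2 ≠ (f c).2 := hbc.2.ne
  constructor
  · rintro ⟨hkc, hk, hno⟩
    by_contra hka
    have hkb : k = b := by
      by_contra hkb
      exact hno a (by omega) (by omega) (by rw [hca])
    exact hba (hkb ▸ hk)
  · rintro rfl
    refine ⟨by omega, by rw [hca], fun j h1 h2 hj => ?_⟩
    obtain rfl : j = b := by omega
    exact hba hj

theorem inclCond_to_iff_of_braid (x : Fin m) : InclCond P f x c ↔ x = b := by
  have hpred := isPred_iff_of_braid hb hc hca hbc
  constructor
  · rintro ⟨hxc, -, ⟨p, hp, hpx, -⟩ | ⟨q, hq, hall, -⟩⟩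
    · have := (hpred p).1 hp
      omega
    · have := hall a ((hpred a).2 rfl)
      have := hq.1
      omega
  · rintro rfl
    refine ⟨by omega, hbc.2, Or.inl ⟨a, (hpred a).2 rfl, by omega, fun q hq => ?_, ?_⟩⟩
    · have hqa : q ≠ a := fun h => hbc.2.ne (by rw [← hq.2.1, h, hca])
      have := hq.1
      omega
    · rw [← hca]
      exact hbc.1.symm

theorem inclCond_from_iff_of_braid (y : Fin m) : InclCond P f c y ↔ IsPred f b y := by
  have hpred := isPred_iff_of_braid hb hc hca hbc
  constructor
  · rintro ⟨-, -, ⟨p, hp, hpc, hall, -⟩ | ⟨q, hq, -, hsign⟩⟩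
    · have := hall a ((hpred a).2 rfl)
      obtain rfl : p = b := by omega
      exact hp
    · rw [(hpred q).1 hq, hca] at hsign
      simp at hsign
  · intro h
    have hyc : y ≠ c := fun hyc => hbc.2.ne (hyc ▸ h.2.1)
    have := h.1
    refine ⟨by omega, by rw [← h.2.1]; exact hbc.2.symm, Or.inl ⟨b, h, by omega, ?_, hbc.1⟩⟩
    intro q hq
    have := (hpred q).1 hq
    omega

theorem dirEdge_to_iff_of_braid (x : Fin m) :
    DirEdge P f x c ↔ (x = a ∧ (f c).1 = true) ∨ (x = b ∧ (f c).1 = false) ∨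
      (c < x ∧ ((IsPred f b x ∧ (f c).1 = true) ∨ (IsPred f c x ∧ (f c).1 = false))) := by
  rcases lt_trichotomy x c with hx | rfl | hx
  · rw [dirEdge_to_iff_of_lt hx, isPred_iff_of_braid hb hc hca hbc,
      inclCond_to_iff_of_braid hb hc hca hbc]
    simp only [not_lt.2 hx.le, false_and, or_false]
    constructor
    · rintro (⟨rfl, h⟩ | ⟨rfl, h⟩)
      · exact Or.inl ⟨rfl, hca ▸ h⟩
      · exact Or.inr ⟨rfl, hbc.1 ▸ h⟩
    · rintro (⟨rfl, h⟩ | ⟨rfl, h⟩)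
      · exact Or.inl ⟨rfl, hca ▸ h⟩
      · exact Or.inr ⟨rfl, hbc.1 ▸ h⟩
  · have hxa : x ≠ a := fun h => by omega
    have hxb : x ≠ b := fun h => by omega
    simp [dirEdge_irrefl, hxa, hxb]
  · have hxa : x ≠ a := fun h => by omega
    have hxb : x ≠ b := fun h => by omega
    rw [dirEdge_to_iff_of_gt hx, inclCond_from_iff_of_braid hb hc hca hbc]
    simp only [hxa, hxb, hx, false_and, true_and, false_or]
    tauto

end Braid

end LocalStructure

section Moves

variable {V : Type*} {m : ℕ} {P : SimpleGraph V} {e e' : Fin m → Bool × V}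

theorem dirEdge_iff_of_opposite_swap {a b : Fin m} (hb : (b : ℕ) = a + 1)
    (hneg : e b = negEnt (e a)) (h'a : e' a = e b) (h'b : e' b = e a)
    (hrest : ∀ l, l ≠ a → l ≠ b → e' l = e l) (x : Fin m) :
    DirEdge P e x b ↔ DirEdge P e' b x := by
  have hsnd : ∀ l, ((negEnt ∘ e') l).2 = (e l).2 := by
    intro l
    by_cases hla : l = a
    · simp [hla, h'a, hneg, negEnt]
    by_cases hlb : l = b
    · simp [hlb, h'b, hneg, negEnt]
    simp [negEnt, hrest l hla hlb]
  have ha : (negEnt ∘ e') a = e a := by simp [h'a, hneg, negEnt_involutive _]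
  have hneg' : (negEnt ∘ e') b = negEnt ((negEnt ∘ e') a) := by
    simp [h'a, h'b, hneg, negEnt_involutive _]
  rw [← dirEdge_negEnt_comp (f := e'), dirEdge_to_iff_of_negEnt_pair hb hneg,
    dirEdge_to_iff_of_negEnt_pair hb hneg', isPred_congr hsnd, hsnd, hsnd, ha]

theorem dirEdge_iff_of_braid_move {a b c : Fin m} (hb : (b : ℕ) = a + 1) (hc : (c : ℕ) = b + 1)
    (hca : e c = e a) (hbc : TAdj P (e b) (e c)) (h'a : e' a = e b) (h'b : e' b = e a)
    (h'c : e' c = e b) (hrest : ∀ l, l ≠ a → l ≠ b → l ≠ c → e' l = e l) (x : Fin m) :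
    DirEdge P e x c ↔ DirEdge P e' c (Equiv.swap a b x) := by
  have hca' : (negEnt ∘ e') c = (negEnt ∘ e') a := by simp [h'a, h'c]
  have hbc' : TAdj P ((negEnt ∘ e') b) ((negEnt ∘ e') c) := by
    rw [Function.comp_apply, Function.comp_apply, tAdj_negEnt, h'b, h'c, ← hca]
    exact ⟨hbc.1.symm, hbc.2.symm⟩
  have hsign : ((negEnt ∘ e') c).1 = !(e c).1 := by simp [h'c, negEnt, hbc.1]
  have hrest' : ∀ l, c < l → (e' l).2 = (e l).2 := fun l hl => by
    rw [hrest l (by omega) (by omega) (by omega)]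
  have hcross₁ : ∀ y, c < y → (IsPred e' b y ↔ IsPred e c y) := fun y =>
    isPred_iff_of_lt_of_snd_eq hc (by rw [h'b, hca]) (by rw [h'c]; exact hbc.2.ne) hrest'
  have hcross₂ : ∀ y, c < y → (IsPred e b y ↔ IsPred e' c y) := fun y =>
    isPred_iff_of_lt_of_snd_eq hc (by rw [h'c]) (by rw [h'c]; exact hbc.2.ne')
      (fun l hl => (hrest' l hl).symm)
  rw [← dirEdge_negEnt_comp (f := e'), dirEdge_to_iff_of_braid hb hc hca hbc,
    dirEdge_to_iff_of_braid hb hc hca' hbc', isPred_negEnt_comp, hsign]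
  have hna : ¬ c < a := by omega
  have hnb : ¬ c < b := by omega
  have hab : a ≠ b := fun h => by omega
  rcases eq_or_ne x a with rfl | hxa
  · simp [hna, hnb, hab, hab.symm]
  rcases eq_or_ne x b with rfl | hxb
  · simp [hna, hnb, hab, hab.symm]
  rw [Equiv.swap_apply_of_ne_of_ne hxa hxb]
  simp only [hxa, hxb, false_and, false_or]
  refine and_congr_right fun hx => ?_
  rw [hcross₁ x hx, ← hcross₂ x hx, Bool.not_eq_true', Bool.not_eq_false']
  tauto

theorem IsMove.moveTrivial_iff {s : MoveSpec m} (hmv : IsMove P e e' s) :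
    MoveTrivial e' s ↔ MoveTrivial e s := by
  cases s with
  | two a b =>
    obtain ⟨-, -, h'a, h'b, -⟩ := hmv
    simp only [MoveTrivial, h'a, h'b]
    exact not_congr eq_negEnt_comm
  | three => rfl

theorem IsMove.negEnt_comp {s : MoveSpec m} (hmv : IsMove P e e' s) :
    IsMove P (negEnt ∘ e) (negEnt ∘ e') s := by
  cases s with
  | two a b =>
    obtain ⟨hb, hadj, h'a, h'b, hrest⟩ := hmv
    exact ⟨hb, by simpa [tAdj_negEnt], by simp [h'a], by simp [h'b],
      fun l h1 h2 => by simp [hrest l h1 h2]⟩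
  | three a b c =>
    obtain ⟨hb, hc, hca, hbc, h'a, h'b, h'c, hrest⟩ := hmv
    exact ⟨hb, hc, by simp [hca], by simpa [tAdj_negEnt], by simp [h'a], by simp [h'b],
      by simp [h'c], fun l h1 h2 h3 => by simp [hrest l h1 h2 h3]⟩

end Moves

section MoveMaps

variable {V : Type*} [DecidableEq V] {m : ℕ} {P : SimpleGraph V} {e e' : Fin m → Bool × V}
  {s : MoveSpec m}

theorem moveSigma_involutive (e : Fin m → Bool × V) (s : MoveSpec m) :
    Function.Involutive (moveSigma e s) := by
  cases s with
  | two a b =>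
    simp only [moveSigma]
    split_ifs
    · exact fun _ => rfl
    · exact Equiv.swap_apply_self a b
  | three a b c => exact Equiv.swap_apply_self a b

theorem IsMove.moveSigma_eq (hmv : IsMove P e e' s) : moveSigma e' s = moveSigma e s := by
  cases s with
  | two a b =>
    obtain ⟨-, -, h'a, h'b, -⟩ := hmv
    simp only [moveSigma, h'a, h'b, eq_negEnt_comm]
  | three => rfl

theorem IsMove.moveSigma_pos (hmv : IsMove P e e' s) (hT : ¬ MoveTrivial e s) :
    moveSigma e s s.pos = s.pos := by
  cases s with
  | two a b =>
    rw [MoveTrivial, not_not] at hT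
    simp [moveSigma, MoveSpec.pos, hT]
  | three a b c =>
    obtain ⟨hb, hc, -⟩ := hmv
    show Equiv.swap a b c = c
    exact Equiv.swap_apply_of_ne_of_ne (by omega) (by omega)

theorem IsMove.dirEdge_pos_iff (hmv : IsMove P e e' s) (hT : ¬ MoveTrivial e s) (y : Fin m) :
    DirEdge P e y s.pos ↔ DirEdge P e' s.pos (moveSigma e s y) := by
  cases s with
  | two a b =>
    obtain ⟨hb, -, h'a, h'b, hrest⟩ := hmv
    rw [MoveTrivial, not_not] at hT
    simpa [moveSigma, MoveSpec.pos, hT] using dirEdge_iff_of_opposite_swap hb hT h'a h'b hrest y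
  | three a b c =>
    obtain ⟨hb, hc, hca, hbc, h'a, h'b, h'c, hrest⟩ := hmv
    exact dirEdge_iff_of_braid_move hb hc hca hbc h'a h'b h'c hrest y

theorem phiP_of_moveTrivial (hT : MoveTrivial e s) :
    phiP P e s = fun x => x ∘ moveSigma e s := by
  funext x l
  simp [phiP, hT]

theorem phiP_of_not_moveTrivial (hT : ¬ MoveTrivial e s) :
    phiP P e s = mutationMap (moveSigma e s) s.pos (DirEdge P e · s.pos) := by
  funext x l
  simp [phiP, mutationMap, hT]

theorem IsMove.phiM_comp_phiP (hmv : IsMove P e e' s) : phiM P e' s ∘ phiP P e s = id := by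
  have hσ : moveSigma (negEnt ∘ e') s = moveSigma e s := by
    rw [moveSigma_negEnt_comp, hmv.moveSigma_eq]
  have hT_iff : MoveTrivial (negEnt ∘ e') s ↔ MoveTrivial e s := by
    rw [moveTrivial_negEnt_comp, hmv.moveTrivial_iff]
  rw [phiM_eq_phiP_negEnt_comp]
  by_cases hT : MoveTrivial e s
  · rw [phiP_of_moveTrivial hT, phiP_of_moveTrivial (hT_iff.2 hT), hσ]
    funext x
    simp [Function.comp_assoc, (moveSigma_involutive e s).comp_self]
  · rw [phiP_of_not_moveTrivial hT, phiP_of_not_moveTrivial (hT_iff.not.2 hT), hσ]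
    refine mutationMap_comp_mutationMap (moveSigma_involutive e s) (hmv.moveSigma_pos hT)
      (fun y => ?_) (dirEdge_irrefl _)
    rw [hmv.dirEdge_pos_iff hT, dirEdge_negEnt_comp]

end MoveMaps

variable {V : Type*} [DecidableEq V] [Fintype V] {W : Type*} [Group W]

theorem phi_inverses_general (P : SimpleGraph V) {m : ℕ} (e e' : Fin m → Bool × V) (s : MoveSpec m)
    (hmv : IsMove P e e' s) :
    phiM P e' s ∘ phiP P e s = id ∧ phiP P e' s ∘ phiM P e s = id := by
  refine ⟨hmv.phiM_comp_phiP, ?_⟩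
  have hflip := hmv.negEnt_comp.phiM_comp_phiP
  rwa [phiM_eq_phiP_negEnt_comp, ← Function.comp_assoc, negEnt_involutive.comp_self,
    Function.id_comp, ← phiM_eq_phiP_negEnt_comp] at hflip

/-- Theorem 3.8 (a): `φ⁻_{i,i'} ∘ φ⁺_{i',i} = Id` and `φ⁺_{i,i'} ∘ φ⁻_{i',i} = Id`. -/
theorem phi_inverses (P : SimpleGraph V) (cs : CoxeterSystem (coxeterMatrix P) W)
    (u v : W) {m : ℕ} (hm : m = cs.length u + cs.length v)
    (e e' : Fin m → Bool × V) (he : IsRWordPair P cs u v e) (he' : IsRWordPair P cs u v e')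
    (s : MoveSpec m) (hmv : IsMove P e e' s) :
    phiM P e' s ∘ phiP P e s = id ∧ phiP P e' s ∘ phiM P e s = id :=
  phi_inverses_general P e e' s hmv

end SLC
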